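/- Let u : ℝ^d → ℝ be convex and everywhere differentiable, let t > 0, and suppose the section D_{x₀}u(t) has finite diameter Λ. Let x₁ ∈ ℝ^d satisfy 2Λ·|∇u(x₁) - ∇u(x₀)| < t and |x₀ - x₁| ≤ Λ. Then D_{x₀}u(t - 2Λ·|∇u(x₁) - ∇u(x₀)|) ⊆ D_{x₁}u(t). -/

import Mathlib

/-!
By convexity a nonempty section `D_{x₀}(s)` has `s ≥ 0` and contains `x₀`, so a point
`y ∈ D_{x₀}(t - 2Λδ)`, `δ = |∇u(x₁) - ∇u(x₀)|`, satisfies `|y - x₀| ≤ Λ` and hence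
`|y - x₁| ≤ 2Λ`. Changing the base point from `x₀` to `x₁` changes the affine gap at `y` by the
nonnegative gap of `x₁` over `x₀` (which only helps) and by `⟨∇u(x₁) - ∇u(x₀), y - x₁⟩`, of size
at most `2Λδ`.
-/

open MeasureTheory Filter Metric Set

noncomputable section

abbrev Ed (d : ℕ) := EuclideanSpace ℝ (Fin d)

/-- The section `D_x u(t) = {y : u(y) - u(x) - (y-x)·∇u(x) ≤ t}`. -/
def Dsec (d : ℕ) (u : Ed d → ℝ) (x : Ed d) (t : ℝ) : Set (Ed d) :=
  {y | u y - u x - (inner ℝ (gradient u x) (y - x) : ℝ) ≤ t}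

open AffineMap in
theorem ConvexOn.apply_sub_le_of_hasFDerivAt {E : Type*} [NormedAddCommGroup E]
    [NormedSpace ℝ E] {s : Set E} {f : E → ℝ} {f' : E →L[ℝ] ℝ} {x y : E} (hf : ConvexOn ℝ s f)
    (hx : x ∈ s) (hy : y ∈ s) (hf' : HasFDerivAt f f' x) :
    f' (y - x) ≤ f y - f x := by
  have hline : ConvexOn ℝ (Icc (0 : ℝ) 1) (f ∘ lineMap x y) :=
    (hf.comp_affineMap (lineMap x y)).subset (hf.1.mapsTo_lineMap hx hy) (convex_Icc 0 1)
  have hderiv : HasDerivAt (f ∘ lineMap x y) (f' (y - x)) (0 : ℝ) := by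
    rw [← lineMap_apply_zero x y (k := ℝ)] at hf'
    exact hf'.comp_hasDerivAt 0 hasDerivAt_lineMap
  simpa [slope_def_field] using
    hline.le_slope_of_hasDerivAt (by simp) (by simp) zero_lt_one hderiv

theorem ConvexOn.inner_gradient_le {E : Type*} [NormedAddCommGroup E] [InnerProductSpace ℝ E]
    [CompleteSpace E] {s : Set E} {f : E → ℝ} {x y : E} (hf : ConvexOn ℝ s f)
    (hx : x ∈ s) (hy : y ∈ s) (hfx : DifferentiableAt ℝ f x) :
    inner ℝ (gradient f x) (y - x) ≤ f y - f x := by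
  simpa using hf.apply_sub_le_of_hasFDerivAt hx hy hfx.hasGradientAt.hasFDerivAt

section Sections

variable {d : ℕ} {u : Ed d → ℝ} {x x₀ x₁ y : Ed d} {r s t : ℝ}

theorem Dsec_mono (hst : s ≤ t) : Dsec d u x s ⊆ Dsec d u x t :=
  fun _ hy => le_trans hy hst

theorem mem_Dsec_self (ht : 0 ≤ t) : x ∈ Dsec d u x t := by
  simpa [Dsec] using ht

theorem nonneg_of_mem_Dsec (hu : ConvexOn ℝ univ u) (hux : DifferentiableAt ℝ u x)
    (hy : y ∈ Dsec d u x t) : 0 ≤ t := by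
  have := hu.inner_gradient_le (mem_univ x) (mem_univ y) hux
  simp only [Dsec, mem_ofPred_eq] at hy
  linarith

theorem mem_Dsec_of_mem_Dsec_sub {S : Set (Ed d)} (hu : ConvexOn ℝ S u) (hx₀ : x₀ ∈ S)
    (hx₁ : x₁ ∈ S) (hux₀ : DifferentiableAt ℝ u x₀) (hr : ‖y - x₁‖ ≤ r)
    (hy : y ∈ Dsec d u x₀ (t - ‖gradient u x₁ - gradient u x₀‖ * r)) : y ∈ Dsec d u x₁ t := by
  have hgap : inner ℝ (gradient u x₀) (x₁ - x₀) ≤ u x₁ - u x₀ :=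
    hu.inner_gradient_le hx₀ hx₁ hux₀
  have hcross : |inner ℝ (gradient u x₁ - gradient u x₀) (y - x₁)|
      ≤ ‖gradient u x₁ - gradient u x₀‖ * r :=
    (abs_real_inner_le_norm _ _).trans (by gcongr)
  have hsplit : inner ℝ (gradient u x₀) (y - x₀)
      = inner ℝ (gradient u x₀) (y - x₁) + inner ℝ (gradient u x₀) (x₁ - x₀) := by
    rw [← inner_add_right, sub_add_sub_cancel]
  simp only [Dsec, mem_ofPred_eq, inner_sub_left] at hy hcross ⊢
  linarith [neg_abs_le (inner ℝ (gradient u x₁) (y - x₁) - inner ℝ (gradient u x₀) (y - x₁))]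

end Sections

theorem stmt10_general (d : ℕ) (u : Ed d → ℝ)
    (hconv : ConvexOn ℝ Set.univ u) (hdiff : Differentiable ℝ u)
    (x₀ x₁ : Ed d) (t : ℝ)
    (hbdd : Bornology.IsBounded (Dsec d u x₀ t))
    (h2 : dist x₀ x₁ ≤ Metric.diam (Dsec d u x₀ t)) :
    Dsec d u x₀ (t - 2 * Metric.diam (Dsec d u x₀ t) * ‖gradient u x₁ - gradient u x₀‖)
      ⊆ Dsec d u x₁ t := by
  set Λ := Metric.diam (Dsec d u x₀ t)
  intro y hy
  have hshift : 0 ≤ 2 * Λ * ‖gradient u x₁ - gradient u x₀‖ := by positivity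
  have hy₀ : dist y x₀ ≤ Λ := by
    have ht : 0 ≤ t := by linarith [nonneg_of_mem_Dsec hconv (hdiff x₀) hy]
    exact dist_le_diam_of_mem hbdd (Dsec_mono (by linarith) hy) (mem_Dsec_self ht)
  have hy₁ : ‖y - x₁‖ ≤ 2 * Λ := by
    rw [← dist_eq_norm]
    linarith [dist_triangle y x₀ x₁]
  refine mem_Dsec_of_mem_Dsec_sub hconv (mem_univ x₀) (mem_univ x₁) (hdiff x₀) hy₁ ?_
  rwa [mul_comm ‖_‖]

/-- Inclusion of sections at nearby points: if `D_{x₀}u(t)` has finite diameter `Λ`,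
`2Λ|∇u(x₁)-∇u(x₀)| < t` and `|x₀-x₁| ≤ Λ`, then
`D_{x₀}u(t - 2Λ|∇u(x₁)-∇u(x₀)|) ⊆ D_{x₁}u(t)`. -/
theorem stmt10 (d : ℕ) (hd : 1 ≤ d) (u : Ed d → ℝ)
    (hconv : ConvexOn ℝ Set.univ u) (hdiff : Differentiable ℝ u)
    (x₀ x₁ : Ed d) (t : ℝ) (ht : 0 < t)
    (hbdd : Bornology.IsBounded (Dsec d u x₀ t))
    (h1 : 2 * Metric.diam (Dsec d u x₀ t) * ‖gradient u x₁ - gradient u x₀‖ < t)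
    (h2 : dist x₀ x₁ ≤ Metric.diam (Dsec d u x₀ t)) :
    Dsec d u x₀ (t - 2 * Metric.diam (Dsec d u x₀ t) * ‖gradient u x₁ - gradient u x₀‖)
      ⊆ Dsec d u x₁ t :=
  stmt10_general d u hconv hdiff x₀ x₁ t hbdd h2
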